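/- Let V be a real random variable whose distribution has a density f with respect to Lebesgue measure, supported on [0,1], with C̲ ≤ f(u) ≤ C̄ for all u ∈ [0,1], where 0 < C̲ < C̄ (necessarily C̲ ≤ 1 ≤ C̄ since f integrates to 1). Then (1/12)·(C̲ + (1−C̲)³/(C̄−C̲)²) ≤ Var(V) ≤ (1/12)·(C̄ − (C̄−1)³/(C̄−C̲)²); in particular C̲/12 ≤ Var(V) ≤ C̄/12. -/

import Mathlib

open MeasureTheory ProbabilityTheory Set

/-!
Write the density on `[0,1]` as `f = C̲ + g` with `0 ≤ g ≤ C̄ - C̲` and `∫ g = 1 - C̲`. A function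
`0 ≤ h ≤ M` of mass `m` has second moment about any point `c` at least that of the slab
`M · 1_[c - r, c + r]`, `r = m / (2M)`, namely `m³ / (12 M²)` (bathtub principle); together with
`∫₀¹ (u - c)² du ≥ 1/12` this bounds `Var V = ∫ (u - E V)² f` from below. For the upper bound,
`Var V ≤ E (V - 1/2)²`, and writing `f = C̄ - g'` with `0 ≤ g' ≤ C̄ - C̲`, `∫ g' = C̄ - 1`, the same
principle bounds `∫ (u - 1/2)² g'` from below.
-/

theorem setIntegral_Icc_sq_sub {a b : ℝ} (hab : a ≤ b) (c : ℝ) :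
    ∫ u in Icc a b, (u - c) ^ 2 = ((b - c) ^ 3 - (a - c) ^ 3) / 3 := by
  rw [integral_Icc_eq_integral_Ioc, ← intervalIntegral.integral_of_le hab,
    intervalIntegral.integral_comp_sub_right (fun x => x ^ 2) c, integral_pow]
  ring

section Transfer

variable {Ω : Type*} [MeasurableSpace Ω] {P : Measure Ω} {V : Ω → ℝ} {f : ℝ → ℝ}

theorem integral_comp_eq_integral_mul_of_map_eq_withDensity (hV : AEMeasurable V P)
    (hf : Measurable f) (hf0 : ∀ u, 0 ≤ f u)
    (hlaw : P.map V = volume.withDensity fun u => ENNReal.ofReal (f u))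
    {g : ℝ → ℝ} (hg : Measurable g) :
    ∫ ω, g (V ω) ∂P = ∫ u, g u * f u := by
  rw [← integral_map hV hg.aestronglyMeasurable, hlaw,
    integral_withDensity_eq_integral_toReal_smul hf.ennreal_ofReal
      (ae_of_all _ fun _ => ENNReal.ofReal_lt_top)]
  simp [ENNReal.toReal_ofReal (hf0 _), mul_comm]

theorem variance_eq_integral_sq_sub_mul_of_map_eq_withDensity (hV : AEMeasurable V P)
    (hf : Measurable f) (hf0 : ∀ u, 0 ≤ f u)
    (hlaw : P.map V = volume.withDensity fun u => ENNReal.ofReal (f u)) :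
    variance V P = ∫ u, (u - ∫ v, v * f v) ^ 2 * f u := by
  have hmean : P[V] = ∫ v, v * f v :=
    integral_comp_eq_integral_mul_of_map_eq_withDensity hV hf hf0 hlaw measurable_id
  rw [variance_eq_integral hV, hmean]
  exact integral_comp_eq_integral_mul_of_map_eq_withDensity hV hf hf0 hlaw
    (g := fun u => (u - ∫ v, v * f v) ^ 2) (by fun_prop)

theorem variance_le_integral_sq_sub_mul_of_map_eq_withDensity [IsProbabilityMeasure P]
    (hV : AEMeasurable V P) (hf : Measurable f) (hf0 : ∀ u, 0 ≤ f u)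
    (hlaw : P.map V = volume.withDensity fun u => ENNReal.ofReal (f u)) (c : ℝ) :
    variance V P ≤ ∫ u, (u - c) ^ 2 * f u := by
  rw [← variance_sub_const hV.aestronglyMeasurable c,
    ← integral_comp_eq_integral_mul_of_map_eq_withDensity hV hf hf0 hlaw (by fun_prop)]
  exact variance_le_expectation_sq (by fun_prop)

end Transfer

section Bathtub

variable {h : ℝ → ℝ} {M : ℝ}

theorem integral_sq_sub_mul_ge_of_radius (h0 : ∀ u, 0 ≤ h u) (hM : ∀ u, h u ≤ M) {r : ℝ}
    (hr : 0 ≤ r) (c : ℝ) (hint : Integrable h) (hint₂ : Integrable fun u => (u - c) ^ 2 * h u) :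
    r ^ 2 * (∫ u, h u) - 4 / 3 * M * r ^ 3 ≤ ∫ u, (u - c) ^ 2 * h u := by
  set I := Icc (c - r) (c + r)
  -- `M · 1_I` is the extremal competitor: `((u - c)² - r²) (h u - M · 1_I u) ≥ 0` everywhere.
  have hpt : ∀ u,
      I.indicator (fun u => M * ((u - c) ^ 2 - r ^ 2)) u ≤ ((u - c) ^ 2 - r ^ 2) * h u := by
    intro u
    by_cases hu : u ∈ I
    · have : (u - c) ^ 2 ≤ r ^ 2 := sq_le_sq' (by linarith [hu.1]) (by linarith [hu.2])
      rw [indicator_of_mem hu]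
      nlinarith [hM u]
    · have : r ^ 2 < (u - c) ^ 2 := by
        simp only [I, mem_Icc, not_and_or, not_le] at hu
        rcases hu with hu | hu <;> nlinarith
      rw [indicator_of_notMem hu]
      nlinarith [h0 u]
  have hI : ∫ u in I, M * ((u - c) ^ 2 - r ^ 2) = -(4 / 3 * M * r ^ 3) := by
    rw [integral_Icc_eq_integral_Ioc, ← intervalIntegral.integral_of_le (by linarith),
      intervalIntegral.integral_comp_sub_right (fun x => M * (x ^ 2 - r ^ 2)) c]
    simp [integral_pow]
    ring
  calc r ^ 2 * (∫ u, h u) - 4 / 3 * M * r ^ 3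
      = r ^ 2 * (∫ u, h u) + ∫ u, I.indicator (fun u => M * ((u - c) ^ 2 - r ^ 2)) u := by
        rw [integral_indicator measurableSet_Icc, hI]; ring
    _ ≤ r ^ 2 * (∫ u, h u) + ∫ u, ((u - c) ^ 2 - r ^ 2) * h u := by
        have hφ : Integrable fun u => I.indicator (fun u => M * ((u - c) ^ 2 - r ^ 2)) u :=
          (continuous_const.mul (by fun_prop)).integrableOn_Icc.integrable_indicator
            measurableSet_Icc
        have hψ : Integrable fun u => ((u - c) ^ 2 - r ^ 2) * h u := by
          refine (hint₂.sub (hint.const_mul (r ^ 2))).congr (ae_of_all _ fun u => ?_)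
          simp only [Pi.sub_apply]
          ring
        linarith [integral_mono hφ hψ hpt]
    _ = ∫ u, (u - c) ^ 2 * h u := by
        simp_rw [sub_mul]
        rw [integral_sub hint₂ (hint.const_mul _), integral_const_mul]
        ring

theorem integral_sq_sub_mul_ge_of_bounded (hM0 : 0 < M) (h0 : ∀ u, 0 ≤ h u) (hM : ∀ u, h u ≤ M)
    (c : ℝ) (hint : Integrable h) (hint₂ : Integrable fun u => (u - c) ^ 2 * h u) :
    1 / 12 * ((∫ u, h u) ^ 3 / M ^ 2) ≤ ∫ u, (u - c) ^ 2 * h u := by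
  have hm : 0 ≤ ∫ u, h u := integral_nonneg h0
  have key := integral_sq_sub_mul_ge_of_radius h0 hM (r := (∫ u, h u) / (2 * M)) (by positivity)
    c hint hint₂
  generalize ∫ u, h u = m at key ⊢
  convert key using 1
  field_simp
  ring

theorem setIntegral_sq_sub_mul_ge_of_bounded {s : Set ℝ} (hs : IsCompact s) (hM0 : 0 < M)
    (h0 : ∀ u ∈ s, 0 ≤ h u) (hM : ∀ u ∈ s, h u ≤ M) (c : ℝ) (hint : IntegrableOn h s) :
    1 / 12 * ((∫ u in s, h u) ^ 3 / M ^ 2) ≤ ∫ u in s, (u - c) ^ 2 * h u := by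
  have hint₂ : IntegrableOn (fun u => (u - c) ^ 2 * h u) s :=
    hint.continuousOn_mul (by fun_prop) hs
  have hmul : (fun u => (u - c) ^ 2 * s.indicator h u) = s.indicator fun u => (u - c) ^ 2 * h u :=
    funext fun u => (indicator_mul_right s (fun u => (u - c) ^ 2) h).symm
  have key := integral_sq_sub_mul_ge_of_bounded (h := s.indicator h) hM0
    (fun u => by by_cases hu : u ∈ s <;> simp [hu, h0])
    (fun u => by by_cases hu : u ∈ s <;> simp [hu, hM, hM0.le]) c
    (hint.integrable_indicator hs.measurableSet)
    (hmul ▸ hint₂.integrable_indicator hs.measurableSet)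
  rwa [hmul, integral_indicator hs.measurableSet, integral_indicator hs.measurableSet] at key

end Bathtub

section UnitInterval

variable {f : ℝ → ℝ} {a b : ℝ}

theorem setIntegral_Icc_zero_one_mem_Icc (hf : IntegrableOn f (Icc 0 1))
    (hbound : ∀ u ∈ Icc (0 : ℝ) 1, a ≤ f u ∧ f u ≤ b) : ∫ u in Icc (0 : ℝ) 1, f u ∈ Icc a b := by
  constructor
  · simpa using setIntegral_mono_on (integrableOn_const (by simp)) hf measurableSet_Icc
      fun u hu => (hbound u hu).1
  · simpa using setIntegral_mono_on hf (integrableOn_const (by simp)) measurableSet_Icc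
      fun u hu => (hbound u hu).2

theorem setIntegral_Icc_zero_one_sq_sub_mul_ge (ha : 0 ≤ a) (hab : a < b)
    (hf : IntegrableOn f (Icc 0 1)) (hmass : ∫ u in Icc (0 : ℝ) 1, f u = 1)
    (hbound : ∀ u ∈ Icc (0 : ℝ) 1, a ≤ f u ∧ f u ≤ b) (c : ℝ) :
    1 / 12 * (a + (1 - a) ^ 3 / (b - a) ^ 2) ≤ ∫ u in Icc (0 : ℝ) 1, (u - c) ^ 2 * f u := by
  have hgap_int : IntegrableOn (fun u => f u - a) (Icc 0 1) := hf.sub (integrableOn_const (by simp))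
  have hgap : ∫ u in Icc (0 : ℝ) 1, (f u - a) = 1 - a := by
    rw [integral_sub hf (integrableOn_const (by simp)), hmass]
    simp
  have hbath := setIntegral_sq_sub_mul_ge_of_bounded isCompact_Icc (sub_pos.2 hab)
    (fun u hu => sub_nonneg.2 (hbound u hu).1) (fun u hu => sub_le_sub_right (hbound u hu).2 a) c
    hgap_int
  have hsplit : ∫ u in Icc (0 : ℝ) 1, (u - c) ^ 2 * f u
      = a * (∫ u in Icc (0 : ℝ) 1, (u - c) ^ 2)
        + ∫ u in Icc (0 : ℝ) 1, (u - c) ^ 2 * (f u - a) := by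
    rw [← integral_const_mul, ← integral_add ((by fun_prop : Continuous _).integrableOn_Icc)
      (hgap_int.continuousOn_mul (by fun_prop) isCompact_Icc)]
    congr 1 with u
    ring
  rw [hsplit, setIntegral_Icc_sq_sub zero_le_one]
  rw [hgap] at hbath
  have huniform : 1 / 12 ≤ ((1 - c) ^ 3 - (0 - c) ^ 3) / 3 := by nlinarith [sq_nonneg (c - 1 / 2)]
  linarith [mul_le_mul_of_nonneg_left huniform ha]

theorem setIntegral_Icc_zero_one_sq_sub_half_mul_le (hab : a < b) (hf : IntegrableOn f (Icc 0 1))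
    (hmass : ∫ u in Icc (0 : ℝ) 1, f u = 1) (hbound : ∀ u ∈ Icc (0 : ℝ) 1, a ≤ f u ∧ f u ≤ b) :
    ∫ u in Icc (0 : ℝ) 1, (u - 1 / 2) ^ 2 * f u ≤ 1 / 12 * (b - (b - 1) ^ 3 / (b - a) ^ 2) := by
  have hb : IntegrableOn (fun _ => b) (Icc (0 : ℝ) 1) := integrableOn_const (by simp)
  have hgap_int : IntegrableOn (fun u => b - f u) (Icc 0 1) := hb.sub hf
  have hgap : ∫ u in Icc (0 : ℝ) 1, (b - f u) = b - 1 := by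
    rw [integral_sub hb hf, hmass]
    simp
  have hbath := setIntegral_sq_sub_mul_ge_of_bounded isCompact_Icc (sub_pos.2 hab)
    (fun u hu => sub_nonneg.2 (hbound u hu).2) (fun u hu => sub_le_sub_left (hbound u hu).1 b)
    (1 / 2) hgap_int
  have hsplit : ∫ u in Icc (0 : ℝ) 1, (u - 1 / 2) ^ 2 * f u
      = b * (∫ u in Icc (0 : ℝ) 1, (u - 1 / 2) ^ 2)
        - ∫ u in Icc (0 : ℝ) 1, (u - 1 / 2) ^ 2 * (b - f u) := by
    rw [← integral_const_mul, ← integral_sub ((by fun_prop : Continuous _).integrableOn_Icc)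
      (hgap_int.continuousOn_mul (by fun_prop) isCompact_Icc)]
    congr 1 with u
    ring
  rw [hsplit, setIntegral_Icc_sq_sub zero_le_one]
  rw [hgap] at hbath
  norm_num
  linarith

end UnitInterval

/-- If a real random variable `V` has a density `f` (w.r.t. Lebesgue
measure) supported on `[0,1]` with `Clo ≤ f ≤ Chi` there, `0 < Clo < Chi`, then
`(1/12)(Clo + (1−Clo)³/(Chi−Clo)²) ≤ Var(V) ≤ (1/12)(Chi − (Chi−1)³/(Chi−Clo)²)`;
in particular `Clo/12 ≤ Var(V) ≤ Chi/12`. -/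
theorem variance_density_bounds
    {Ω : Type*} [MeasurableSpace Ω] (P : Measure Ω) [IsProbabilityMeasure P]
    (V : Ω → ℝ) (hVmeas : Measurable V)
    (Clo Chi : ℝ) (hClo : 0 < Clo) (hCloChi : Clo < Chi)
    (f : ℝ → ℝ) (hfmeas : Measurable f)
    (hlaw : Measure.map V P = volume.withDensity (fun u => ENNReal.ofReal (f u)))
    (hfsupp : ∀ u : ℝ, u ∉ Set.Icc (0 : ℝ) 1 → f u = 0)
    (hfbound : ∀ u ∈ Set.Icc (0 : ℝ) 1, Clo ≤ f u ∧ f u ≤ Chi) :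
    ((1 / 12) * (Clo + (1 - Clo) ^ 3 / (Chi - Clo) ^ 2) ≤ variance V P
        ∧ variance V P ≤ (1 / 12) * (Chi - (Chi - 1) ^ 3 / (Chi - Clo) ^ 2))
      ∧ (Clo / 12 ≤ variance V P ∧ variance V P ≤ Chi / 12) := by
  have hf0 : ∀ u, 0 ≤ f u := fun u => by
    by_cases hu : u ∈ Icc (0 : ℝ) 1
    · exact hClo.le.trans (hfbound u hu).1
    · exact (hfsupp u hu).ge
  have hIcc : ∀ g : ℝ → ℝ, ∫ u, g u * f u = ∫ u in Icc (0 : ℝ) 1, g u * f u := fun g =>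
    (setIntegral_eq_integral_of_forall_compl_eq_zero fun u hu => by rw [hfsupp u hu, mul_zero]).symm
  have hfI : IntegrableOn f (Icc 0 1) :=
    Measure.integrableOn_of_bounded (by simp) hfmeas.aestronglyMeasurable
      (ae_restrict_of_forall_mem measurableSet_Icc fun u hu => by
        rw [Real.norm_of_nonneg (hf0 u)]; exact (hfbound u hu).2)
  have hmass : ∫ u in Icc (0 : ℝ) 1, f u = 1 := by
    have := integral_comp_eq_integral_mul_of_map_eq_withDensity hVmeas.aemeasurable hfmeas hf0
      hlaw (g := fun _ => 1) measurable_const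
    rw [hIcc] at this
    simpa using this.symm
  have hvar : variance V P = ∫ u in Icc (0 : ℝ) 1, (u - ∫ v, v * f v) ^ 2 * f u :=
    (variance_eq_integral_sq_sub_mul_of_map_eq_withDensity hVmeas.aemeasurable hfmeas hf0
      hlaw).trans (hIcc _)
  have hvar_le : variance V P ≤ ∫ u in Icc (0 : ℝ) 1, (u - 1 / 2) ^ 2 * f u :=
    (variance_le_integral_sq_sub_mul_of_map_eq_withDensity hVmeas.aemeasurable hfmeas hf0
      hlaw _).trans_eq (hIcc _)
  have hlow :=
    setIntegral_Icc_zero_one_sq_sub_mul_ge hClo.le hCloChi hfI hmass hfbound (∫ v, v * f v)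
  have hup := setIntegral_Icc_zero_one_sq_sub_half_mul_le hCloChi hfI hmass hfbound
  obtain ⟨hClo1, hChi1⟩ := hmass ▸ setIntegral_Icc_zero_one_mem_Icc hfI hfbound
  have hlow_gap : 0 ≤ (1 - Clo) ^ 3 / (Chi - Clo) ^ 2 := by
    have := sub_nonneg.2 hClo1; positivity
  have hup_gap : 0 ≤ (Chi - 1) ^ 3 / (Chi - Clo) ^ 2 := by
    have := sub_nonneg.2 hChi1; positivity
  refine ⟨⟨hvar ▸ hlow, hvar_le.trans hup⟩, by linarith, by linarith⟩
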